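/- arXiv:2404.10079 — 2 statements merged into one kernel-verified Lean document; each statement's English description precedes it below -/
import Mathlib

section
/- Let V be a finite-dimensional real vector space, let J₀, J₁ : V → V satisfy J₀² = J₁² = -id, and suppose id - J₀J₁ is invertible. Set L := (id - J₀J₁)⁻¹(id + J₀J₁). Then id + L is invertible and (id + L) J₀ (id + L)⁻¹ = J₁. -/
/-!
Writing `A = 1 - J₀ J₁`, the squares `J₀² = J₁² = -1` give `J₀ A = J₀ + J₁ = A J₁`, so `A⁻¹`
conjugates `J₀` into `J₁`. Since `A + (1 + J₀ J₁) = 2`, we get `1 + L = A⁻¹ · 2`, a unit which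
conjugates `J₀` into `J₁` as well, because the scalar `2` is central.
-/

theorem semiconjBy_one_sub_mul_of_mul_self_eq_neg_one {R : Type*} [Ring R] {a b : R}
    (ha : a * a = -1) (hb : b * b = -1) : SemiconjBy (1 - a * b) b a := by
  have hab : a * (1 - a * b) = a + b := by rw [mul_sub, ← mul_assoc, ha]; noncomm_ring
  have hba : (1 - a * b) * b = a + b := by rw [sub_mul, mul_assoc, hb]; noncomm_ring
  rw [SemiconjBy, hab, hba]

theorem SemiconjBy.ringInverse_symm_left {M₀ : Type*} [MonoidWithZero M₀] {a x y : M₀}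
    (ha : IsUnit a) (h : SemiconjBy a x y) : SemiconjBy (Ring.inverse a) y x := by
  obtain ⟨u, rfl⟩ := ha
  rw [Ring.inverse_unit]
  exact h.units_inv_symm_left

theorem mul_ringInverse_eq_of_semiconjBy {M₀ : Type*} [MonoidWithZero M₀] {a x y : M₀}
    (ha : IsUnit a) (h : SemiconjBy a x y) : a * x * Ring.inverse a = y := by
  rw [h.eq, Ring.mul_inverse_cancel_right _ _ ha]

theorem one_add_ringInverse_one_sub_mul_one_add {R : Type*} [Ring R] {x : R}
    (h : IsUnit (1 - x)) : 1 + Ring.inverse (1 - x) * (1 + x) = Ring.inverse (1 - x) * 2 := by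
  nth_rewrite 1 [← Ring.inverse_mul_cancel _ h]
  rw [← mul_add, sub_add_add_cancel, one_add_one_eq_two]

theorem stmt_2_general (V : Type*) [AddCommGroup V] [Module ℝ V]
    (J₀ J₁ : Module.End ℝ V)
    (hJ₀ : J₀ * J₀ = -1) (hJ₁ : J₁ * J₁ = -1)
    (hInv : IsUnit (1 - J₀ * J₁))
    (L : Module.End ℝ V)
    (hL : L = Ring.inverse (1 - J₀ * J₁) * (1 + J₀ * J₁)) :
    IsUnit (1 + L) ∧ (1 + L) * J₀ * Ring.inverse (1 + L) = J₁ := by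
  have hL₁ : 1 + L = Ring.inverse (1 - J₀ * J₁) * 2 := by
    rw [hL, one_add_ringInverse_one_sub_mul_one_add hInv]
  have hunit : IsUnit (1 + L) := by
    rw [hL₁]
    exact (isUnit_ringInverse.mpr hInv).mul (isUnit_of_invertible 2)
  have hconj : SemiconjBy (1 + L) J₀ J₁ := by
    rw [hL₁]
    exact ((semiconjBy_one_sub_mul_of_mul_self_eq_neg_one hJ₀ hJ₁).ringInverse_symm_left
      hInv).mul_left (Commute.ofNat_left 2 J₀)
  exact ⟨hunit, mul_ringInverse_eq_of_semiconjBy hunit hconj⟩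

theorem stmt_2 (V : Type*) [AddCommGroup V] [Module ℝ V] [FiniteDimensional ℝ V]
    (J₀ J₁ : Module.End ℝ V)
    (hJ₀ : J₀ * J₀ = -1) (hJ₁ : J₁ * J₁ = -1)
    (hInv : IsUnit (1 - J₀ * J₁))
    (L : Module.End ℝ V)
    (hL : L = Ring.inverse (1 - J₀ * J₁) * (1 + J₀ * J₁)) :
    IsUnit (1 + L) ∧ (1 + L) * J₀ * Ring.inverse (1 + L) = J₁ :=
  stmt_2_general V J₀ J₁ hJ₀ hJ₁ hInv L hL
end

section
/- Let G : ℝ → Matrix (Fin n) (Fin m) ℝ be a matrix-valued function, real analytic on an open interval containing [−a, a] (each entry is real analytic). Let k := max(rank(G 0), rank(G a)). Then the set {t ∈ [−a, a] : rank(G t) < k} is finite. -/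
/-!
If `rank (G t₀) ≥ k`, some `k × k` minor of `G t₀` has nonzero determinant. The same minor of
`G t` is an analytic function of `t` that does not vanish identically, so by the identity theorem
its zeros have no accumulation point in the interval and only finitely many lie in the compact
`[-a, a]`. Away from these zeros the minor forces `rank (G t) ≥ k`. Apply this at `t₀ = 0` and
`t₀ = a`.
-/

open Module Submodule Set Filter

theorem exists_linearIndependent_comp_of_le_finrank_span {K V ι : Type*} [Field K]
    [AddCommGroup V] [Module K V] [Finite ι] (v : ι → V) {k : ℕ}
    (hk : k ≤ finrank K (span K (range v))) : ∃ r : Fin k → ι, LinearIndependent K (v ∘ r) := by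
  obtain ⟨κ, a, ha, hspan, hli⟩ := exists_linearIndependent' K v
  have := Finite.of_injective a ha
  cases nonempty_fintype κ
  rw [← hspan, finrank_span_eq_card hli] at hk
  obtain ⟨e⟩ := Function.Embedding.nonempty_of_card_le (α := Fin k) (by simpa using hk)
  exact ⟨a ∘ e, hli.comp e e.injective⟩

namespace Matrix

theorem exists_isUnit_det_submatrix_of_le_rank {K m n : Type*} [Field K] [Fintype m] [Fintype n]
    (A : Matrix m n K) {k : ℕ} (hk : k ≤ A.rank) :
    ∃ (r : Fin k → m) (c : Fin k → n), IsUnit (A.submatrix r c).det := by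
  rw [rank_eq_finrank_span_cols] at hk
  obtain ⟨c, hc⟩ := exists_linearIndependent_comp_of_le_finrank_span A.col hk
  have hk' : k ≤ finrank K (span K (range (A.submatrix id c).row)) := by
    rw [← rank_eq_finrank_span_row, ← rank_transpose,
      LinearIndependent.rank_matrix (M := (A.submatrix id c)ᵀ) hc, Fintype.card_fin]
  obtain ⟨r, hr⟩ := exists_linearIndependent_comp_of_le_finrank_span _ hk'
  exact ⟨r, c, (isUnit_iff_isUnit_det _).mp (linearIndependent_rows_iff_isUnit.mp hr)⟩

theorem le_rank_of_isUnit_det_submatrix {K m n : Type*} [Field K] [Fintype m] [Fintype n]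
    {A : Matrix m n K} {k : ℕ} {r : Fin k → m} {c : Fin k → n}
    (h : IsUnit (A.submatrix r c).det) : k ≤ A.rank := by
  simpa [rank_of_isUnit _ ((isUnit_iff_isUnit_det _).mpr h)] using rank_submatrix_le A r c

end Matrix

theorem AnalyticOnNhd.matrix_det {𝕜 E ι : Type*} [NontriviallyNormedField 𝕜]
    [NormedAddCommGroup E] [NormedSpace 𝕜 E] [Fintype ι] [DecidableEq ι]
    {A : E → Matrix ι ι 𝕜} {s : Set E} (hA : ∀ i j, AnalyticOnNhd 𝕜 (fun x => A x i j) s) :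
    AnalyticOnNhd 𝕜 (fun x => (A x).det) s := by
  simp_rw [Matrix.det_apply']
  exact Finset.analyticOnNhd_fun_sum _ fun σ _ =>
    analyticOnNhd_const.mul (Finset.analyticOnNhd_fun_prod _ fun i _ => hA _ _)

theorem AnalyticOnNhd.finite_zeros_inter_of_isCompact {𝕜 E : Type*} [NontriviallyNormedField 𝕜]
    [NormedAddCommGroup E] [NormedSpace 𝕜 E] {f : 𝕜 → E} {U K : Set 𝕜} {z₀ : 𝕜}
    (hf : AnalyticOnNhd 𝕜 f U) (hU : IsPreconnected U) (h₀ : z₀ ∈ U) (hz₀ : f z₀ ≠ 0)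
    (hK : IsCompact K) (hKU : K ⊆ U) : {z ∈ K | f z = 0}.Finite := by
  obtain hzero | hne := hf.eqOn_zero_or_eventually_ne_zero_of_preconnected hU
  · exact absurd (hzero h₀) hz₀
  have := hK.finite_sdiff_of_mem_codiscreteWithin (codiscreteWithin_mono hKU hne)
  convert this using 1
  ext; simp

theorem Matrix.finite_setOf_rank_lt_of_analyticOnNhd {𝕜 m n : Type*} [NontriviallyNormedField 𝕜]
    [Fintype m] [Fintype n] {G : 𝕜 → Matrix m n 𝕜} {U K : Set 𝕜} {t₀ : 𝕜}
    (hG : ∀ i j, AnalyticOnNhd 𝕜 (fun t => G t i j) U) (hU : IsPreconnected U) (ht₀ : t₀ ∈ U)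
    (hK : IsCompact K) (hKU : K ⊆ U) : {t ∈ K | (G t).rank < (G t₀).rank}.Finite := by
  classical
  obtain ⟨r, c, hdet⟩ := (G t₀).exists_isUnit_det_submatrix_of_le_rank le_rfl
  have hminor : AnalyticOnNhd 𝕜 (fun t => ((G t).submatrix r c).det) U :=
    AnalyticOnNhd.matrix_det fun i j => hG (r i) (c j)
  refine (hminor.finite_zeros_inter_of_isCompact hU ht₀ hdet.ne_zero hK hKU).subset ?_
  rintro t ⟨htK, hlt⟩
  refine ⟨htK, by_contra fun hne => hlt.not_ge ?_⟩
  exact le_rank_of_isUnit_det_submatrix (isUnit_iff_ne_zero.mpr hne)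

theorem stmt_4_general (n m : ℕ) (G : ℝ → Matrix (Fin n) (Fin m) ℝ) (a c d : ℝ)
    (hsub : Set.Icc (-a) a ⊆ Set.Ioo c d)
    (hG : ∀ i j, AnalyticOnNhd ℝ (fun t => G t i j) (Set.Ioo c d))
    (k : ℕ) (hk : k = max (G 0).rank (G a).rank) :
    {t ∈ Set.Icc (-a) a | (G t).rank < k}.Finite := by
  obtain ha | ha := lt_or_ge a 0
  · simp [Set.Icc_eq_empty (by linarith : ¬-a ≤ a)]
  have finite_rank_lt_rank_at : ∀ t₀ ∈ Set.Icc (-a) a,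
      {t ∈ Set.Icc (-a) a | (G t).rank < (G t₀).rank}.Finite := fun t₀ ht₀ =>
    Matrix.finite_setOf_rank_lt_of_analyticOnNhd hG isPreconnected_Ioo (hsub ht₀) isCompact_Icc hsub
  refine ((finite_rank_lt_rank_at 0 ⟨by linarith, ha⟩).union
    (finite_rank_lt_rank_at a ⟨by linarith, le_rfl⟩)).subset ?_
  rintro t ⟨ht, hlt⟩
  rw [hk, lt_max_iff] at hlt
  exact hlt.imp (⟨ht, ·⟩) (⟨ht, ·⟩)

theorem stmt_4 (n m : ℕ) (G : ℝ → Matrix (Fin n) (Fin m) ℝ) (a c d : ℝ)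
    (ha : 0 < a) (hsub : Set.Icc (-a) a ⊆ Set.Ioo c d)
    (hG : ∀ i j, AnalyticOnNhd ℝ (fun t => G t i j) (Set.Ioo c d))
    (k : ℕ) (hk : k = max (G 0).rank (G a).rank) :
    {t ∈ Set.Icc (-a) a | (G t).rank < k}.Finite :=
  stmt_4_general n m G a c d hsub hG k hk
end
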